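/- Imbrication of structures of the form x ∔ No composes via concatenation: for surreal numbers x, y, the image of y ∔ No under the parametrisation z ↦ x ∔ z equals (x ∔ y) ∔ No. Similarly (x ⨰ No) imbricated with (y ⨰ No) equals (x ⨰ y) ⨰ No, and (x ⨰ No) imbricated with (y ∔ No) equals (x ⨰ y) ∔ (x ⨰ No). -/

import Mathlib

open Ordinal

attribute [local instance] Classical.propDecidable

/-- A surreal number presented as a sign sequence: a map from an ordinal (its
length) to `{-1, +1}`, extended by `0` beyond its length. -/
structure SSurreal : Type 1 where
  length : Ordinal.{0}
  sign : Ordinal → ℤ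
  sign_mem : ∀ α, α < length → sign α = 1 ∨ sign α = -1
  sign_zero : ∀ α, ¬ α < length → sign α = 0

namespace SSurreal

/-- Simplicity: `x ⊑ y`, i.e. `x` is an initial segment of `y`. -/
def sle (x y : SSurreal) : Prop := ∀ α, α < x.length → x.sign α = y.sign α

/-- Strict simplicity `x ⊏ y`. -/
def slt (x y : SSurreal) : Prop := sle x y ∧ x ≠ y

/-- The (lexicographic, Conway) order on sign sequences. -/
def lt (x y : SSurreal) : Prop :=
  ∃ α, (∀ β, β < α → x.sign β = y.sign β) ∧ x.sign α < y.sign α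

/-- The empty sign sequence, i.e. the surreal number `0`. -/
noncomputable def zero : SSurreal :=
  ⟨0, fun _ => 0, fun α h => absurd h (not_lt_of_ge (zero_le (a := α))), fun _ _ => rfl⟩

/-- The ordinal `o` viewed as the constant `+1` sign sequence of length `o`. -/
noncomputable def ofOrdinal (o : Ordinal) : SSurreal :=
  ⟨o, fun α => if α < o then 1 else 0, fun α h => Or.inl (if_pos h), fun α h => if_neg h⟩

/-- The surreal number `1`. -/
noncomputable def one : SSurreal := ofOrdinal 1

/-- The surreal number `-1`. -/
noncomputable def negOne : SSurreal :=
  ⟨1, fun α => if α < 1 then -1 else 0, fun α h => Or.inr (if_pos h), fun α h => if_neg h⟩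

/-- Negation: flip every sign. -/
noncomputable def neg (x : SSurreal) : SSurreal :=
  ⟨x.length, fun α => - x.sign α,
    fun α h => by rcases x.sign_mem α h with h' | h' <;> simp [h'],
    fun α h => by simp [x.sign_zero α h]⟩

/-- Concatenation `x ∔ y` of sign sequences. -/
noncomputable def concat (x y : SSurreal) : SSurreal where
  length := x.length + y.length
  sign α := if α < x.length then x.sign α else y.sign (α - x.length)
  sign_mem := by
    intro α h
    try dsimp only
    by_cases hx : α < x.length
    · rw [if_pos hx]; exact x.sign_mem α hx
    · rw [if_neg hx]
      refine y.sign_mem _ ?_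
      have hle : x.length ≤ α := le_of_not_gt hx
      have := Ordinal.sub_lt_of_le hle (c := y.length)
      exact this.mpr h
  sign_zero := by
    intro α h
    try dsimp only
    have hx : ¬ α < x.length := fun hx =>
      h (hx.trans_le le_self_add)
    rw [if_neg hx]
    refine y.sign_zero _ ?_
    intro hy
    exact h ((Ordinal.sub_lt_of_le (le_of_not_gt hx)).mp hy)

/-- The concatenation product `x ⨰ y` of sign sequences. -/
noncomputable def mul (x y : SSurreal) : SSurreal where
  length := x.length * y.length
  sign γ := if γ < x.length * y.length then y.sign (γ / x.length) * x.sign (γ % x.length) else 0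
  sign_mem := by
    intro γ h
    try dsimp only
    rw [if_pos h]
    have hx0 : x.length ≠ 0 := by
      intro h0; rw [h0, zero_mul] at h; exact (not_lt_of_ge (zero_le (a := γ))) h
    have h1 : γ / x.length < y.length := by
      rwa [Ordinal.div_lt hx0]
    have h2 : γ % x.length < x.length := Ordinal.mod_lt γ hx0
    rcases y.sign_mem _ h1 with hy | hy <;> rcases x.sign_mem _ h2 with hx | hx <;>
      simp [hy, hx]
  sign_zero := fun γ h => if_neg h

/-- `s` is the supremum of `C` with respect to simplicity. -/
def IsSimpSup (C : Set SSurreal) (s : SSurreal) : Prop :=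
  (∀ x ∈ C, sle x s) ∧ ∀ t, (∀ x ∈ C, sle x t) → sle s t

/-- The supremum of a ⊏-chain of sign sequences (their union), when it
exists; junk value `zero` otherwise. -/
noncomputable def chainSup (C : Set SSurreal) : SSurreal :=
  if h : ∃ s, IsSimpSup C s then h.choose else zero

/-- Transfinite concatenation `[α, f] = ∔_{γ<α} f(γ)`. -/
noncomputable def concatSum (α : Ordinal) (f : Ordinal → SSurreal) : SSurreal :=
  Ordinal.limitRecOn α zero (fun β ih => concat ih (f β))
    (fun γ _ ih => chainSup (Set.range fun p : Set.Iio γ => ih p.1 p.2))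

/-- Restriction of `z` to an initial segment of length (at most) `β`. -/
noncomputable def trunc (z : SSurreal) (β : Ordinal) : SSurreal where
  length := min β z.length
  sign α := if α < min β z.length then z.sign α else 0
  sign_mem := fun α h => by
    try dsimp only
    rw [if_pos h]; exact z.sign_mem α (h.trans_le (min_le_right _ _))
  sign_zero := fun α h => if_neg h

/-- The number of `+1` signs occurring in `s` strictly below `γ`. -/
noncomputable def countPlus (s : Ordinal → ℤ) (γ : Ordinal) : Ordinal :=
  Ordinal.limitRecOn γ 0 (fun β ih => if s β = 1 then ih + 1 else ih)
    (fun γ' _ ih => ⨆ β : Set.Iio γ', ih β.1 β.2)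

/-- `τ_u`: the ordinal number of `+1` signs in the sign sequence of `u`. -/
noncomputable def tau (u : SSurreal) : Ordinal := countPlus u.sign u.length

end SSurreal

/-!
All three identities are algebraic laws of the sign-sequence operations, since the image of
`Set.range g` under `f` is `Set.range (f ∘ g)`: associativity of `∔`, associativity of `⨰`, and
left distributivity of `⨰` over `∔`. Concatenation is handled by splitting positions as
`x.length + β`; for the product, the sign of `x ⨰ y` at `x.length * q + r` with `r < x.length`
is `y.sign q * x.sign r`, so the laws reduce to ordinal division with remainder.
-/

namespace SSurreal

@[ext]
theorem ext {x y : SSurreal} (hlength : x.length = y.length)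
    (hsign : ∀ α, x.sign α = y.sign α) : x = y := by
  obtain ⟨lx, sx, _, _⟩ := x
  obtain ⟨ly, sy, _, _⟩ := y
  obtain rfl : lx = ly := hlength
  obtain rfl : sx = sy := funext hsign
  rfl

theorem sign_eq_zero_of_length_eq_zero {x : SSurreal} (hx : x.length = 0) (α : Ordinal) :
    x.sign α = 0 :=
  x.sign_zero α (by simp [hx])

theorem length_mul (x y : SSurreal) : (mul x y).length = x.length * y.length := rfl

theorem sign_concat_of_lt {x y : SSurreal} {α : Ordinal} (h : α < x.length) :
    (concat x y).sign α = x.sign α :=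
  if_pos h

theorem sign_concat_add (x y : SSurreal) (α : Ordinal) :
    (concat x y).sign (x.length + α) = y.sign α := by
  simp [concat]

theorem concat_assoc (x y z : SSurreal) :
    concat x (concat y z) = concat (concat x y) z := by
  ext α
  · exact (add_assoc _ _ _).symm
  rcases lt_or_ge α x.length with hα | hα
  · rw [sign_concat_of_lt hα, sign_concat_of_lt (hα.trans_le le_self_add), sign_concat_of_lt hα]
  obtain ⟨β, rfl⟩ := exists_add_of_le hα
  rw [sign_concat_add]
  rcases lt_or_ge β y.length with hβ | hβ
  · rw [sign_concat_of_lt hβ, sign_concat_of_lt ((add_lt_add_iff_left _).2 hβ), sign_concat_add]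
  obtain ⟨δ, rfl⟩ := exists_add_of_le hβ
  rw [sign_concat_add, ← add_assoc]
  exact (sign_concat_add _ z δ).symm

theorem sign_mul (x y : SSurreal) (γ : Ordinal) :
    (mul x y).sign γ = y.sign (γ / x.length) * x.sign (γ % x.length) := by
  by_cases hγ : γ < x.length * y.length
  · exact if_pos hγ
  rw [show (mul x y).sign γ = 0 from if_neg hγ]
  rcases eq_or_ne x.length 0 with hx | hx
  · rw [sign_eq_zero_of_length_eq_zero hx, mul_zero]
  · rw [y.sign_zero _ (by rwa [← Ordinal.lt_mul_iff_div_lt hx]), zero_mul]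

theorem sign_mul_mul_add (x y : SSurreal) {q r : Ordinal} (hr : r < x.length) :
    (mul x y).sign (x.length * q + r) = y.sign q * x.sign r := by
  rw [sign_mul, Ordinal.mul_add_div _ (ne_bot_of_gt hr), Ordinal.div_eq_zero_of_lt hr,
    add_zero, Ordinal.mul_add_mod_self, Ordinal.mod_eq_of_lt hr]

theorem mul_assoc (x y z : SSurreal) :
    mul x (mul y z) = mul (mul x y) z := by
  ext γ
  · exact (_root_.mul_assoc _ _ _).symm
  rcases eq_or_ne x.length 0 with hx | hx
  · simp [sign_mul, sign_eq_zero_of_length_eq_zero hx]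
  obtain ⟨q, r, hr, rfl⟩ : ∃ q r, r < x.length ∧ x.length * q + r = γ :=
    ⟨_, _, Ordinal.mod_lt γ hx, Ordinal.div_add_mod γ _⟩
  rw [sign_mul_mul_add _ _ hr, sign_mul (mul x y), length_mul, Ordinal.mul_add_div_mul hr,
    Ordinal.mul_add_mod_mul hr, sign_mul_mul_add _ _ hr, sign_mul]
  ring

theorem mul_concat (x y z : SSurreal) :
    mul x (concat y z) = concat (mul x y) (mul x z) := by
  ext γ
  · exact mul_add _ _ _
  rcases eq_or_ne x.length 0 with hx | hx
  · simp [sign_mul, concat, sign_eq_zero_of_length_eq_zero hx]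
  obtain ⟨q, r, hr, rfl⟩ : ∃ q r, r < x.length ∧ x.length * q + r = γ :=
    ⟨_, _, Ordinal.mod_lt γ hx, Ordinal.div_add_mod γ _⟩
  rw [sign_mul_mul_add _ _ hr]
  rcases lt_or_ge q y.length with hq | hq
  · have hγ : x.length * q + r < x.length * y.length := by
      rw [Ordinal.lt_mul_iff_div_lt hx, Ordinal.mul_add_div _ hx, Ordinal.div_eq_zero_of_lt hr,
        add_zero]
      exact hq
    rw [sign_concat_of_lt hq, sign_concat_of_lt hγ, sign_mul_mul_add _ _ hr]
  obtain ⟨δ, rfl⟩ := exists_add_of_le hq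
  rw [sign_concat_add, mul_add, add_assoc, ← length_mul, sign_concat_add,
    sign_mul_mul_add _ _ hr]

end SSurreal

open SSurreal in
/-- imbrication of structures `x ∔ No` and `x ⨰ No`:
`(x ∔ No) ⧸ (y ∔ No) = (x ∔ y) ∔ No`, `(x ⨰ No) ⧸ (y ⨰ No) = (x ⨰ y) ⨰ No`,
and `(x ⨰ No) ⧸ (y ∔ No) = (x ⨰ y) ∔ (x ⨰ No)`. -/
theorem imbrication_of_concat_and_mul_structures (x y : SSurreal) :
    (fun z => concat x z) '' Set.range (fun z => concat y z)
        = Set.range (fun z => concat (concat x y) z) ∧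
    (fun z => mul x z) '' Set.range (fun z => mul y z)
        = Set.range (fun z => mul (mul x y) z) ∧
    (fun z => mul x z) '' Set.range (fun z => concat y z)
        = Set.range (fun z => concat (mul x y) (mul x z)) := by
  simp only [← Set.range_comp, Function.comp_def, concat_assoc, mul_assoc, mul_concat, and_self]
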